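/- The map c_{φ,S}(X₁,X₂) = inf{c > 0 : ∫_{Ω/Λ} φ(d_S(ι_{X₁}(x), ι_{X₂}(x))/c) dμ(x) < ∞} is a pseudo-metric (allowing value +∞) on the set of fundamental domains of a smooth measure-preserving action of a finitely generated group Λ on (Ω,μ), where φ : ℝ≥0 → ℝ≥0 is non-decreasing. In particular it satisfies the triangle inequality c_{φ,S}(X₁,X₃) ≤ c_{φ,S}(X₁,X₂) + c_{φ,S}(X₂,X₃). -/

import Mathlib

/-!
Along almost every orbit, each fundamental domain meets the orbit in exactly one point, so words
`ω ↦ ι₂ ω` and `ι₂ ω ↦ ι₃ ω` concatenate to a word `ω ↦ ι₃ ω`, and for monotone `φ`,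
`φ((a + b)/(c₁ + c₂)) ≤ max (φ(a/c₁)) (φ(b/c₂))`. Integrating over `X₁`, the first term gives the
`c₁`-integral for `(X₁, X₂)`; the second is a `Λ`-invariant function of the orbit, so its
integral over `X₁` equals its integral over `X₂`, which is the `c₂`-integral for `(X₂, X₃)`.
-/

open MeasureTheory

/-- The Schreier graph metric on `Λ`-orbits induced by a finite symmetric generating
set `S`. -/
noncomputable def schreierDist {Λ : Type*} [Group Λ] {Ω : Type*} [MulAction Λ Ω]
    (S : Finset Λ) (x y : Ω) : ℕ :=
  sInf {n : ℕ | ∃ l : List Λ, l.length = n ∧ (∀ u ∈ l, u ∈ S ∨ u⁻¹ ∈ S) ∧ l.prod • x = y}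

open Pointwise
open scoped NNReal ENNReal

section Schreier

variable {Λ : Type*} [Group Λ] {Ω : Type*} [MulAction Λ Ω]

def IsSchreierWord (S : Finset Λ) (l : List Λ) : Prop := ∀ u ∈ l, u ∈ S ∨ u⁻¹ ∈ S

theorem schreierDist_le_length {S : Finset Λ} {l : List Λ} (hl : IsSchreierWord S l)
    {x y : Ω} (hxy : l.prod • x = y) : schreierDist S x y ≤ l.length :=
  Nat.sInf_le ⟨l, rfl, hl, hxy⟩

theorem exists_isSchreierWord_length_eq_schreierDist {S : Finset Λ}
    (hS : Subgroup.closure (S : Set Λ) = ⊤) {x y : Ω} (hy : y ∈ MulAction.orbit Λ x) :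
    ∃ l : List Λ, IsSchreierWord S l ∧ l.length = schreierDist S x y ∧ l.prod • x = y := by
  obtain ⟨γ, rfl⟩ := hy
  have hγ : γ ∈ Submonoid.closure ((S : Set Λ) ∪ (S : Set Λ)⁻¹) := by
    rw [← Subgroup.closure_toSubmonoid, hS]; trivial
  obtain ⟨l, hlS, rfl⟩ := Submonoid.exists_list_of_mem_closure hγ
  have hne : ∃ n, n ∈ {n : ℕ | ∃ l' : List Λ, l'.length = n ∧ IsSchreierWord S l' ∧
      l'.prod • x = l.prod • x} := ⟨l.length, l, rfl, fun u hu => (hlS u hu).imp_right id, rfl⟩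
  obtain ⟨l', hl', hlS', hl'x⟩ := Nat.sInf_mem hne
  exact ⟨l', hlS', hl', hl'x⟩

end Schreier

theorem aemeasurable_iInf_mem_const {Ω : Type*} [MeasurableSpace Ω] {μ : Measure Ω} {A : Set Ω}
    (hA : NullMeasurableSet A μ) (a : ℝ≥0∞) : AEMeasurable (fun ω => ⨅ (_ : ω ∈ A), a) μ := by
  have : (fun ω => ⨅ (_ : ω ∈ A), a) = fun ω => a + Aᶜ.indicator (fun _ => ⊤) ω := by
    ext ω; by_cases hω : ω ∈ A <;> simp [hω]
  rw [this]
  exact aemeasurable_const.add (aemeasurable_const.indicator₀ hA.compl)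

noncomputable section WordWeight

variable {Λ : Type*} [Group Λ] {Ω : Type*} [MulAction Λ Ω]

/-- Stands in for `w (schreierDist S ω (ι ω))`, which need not be measurable since `ι` need not
be; as an infimum over countably many words it is a.e.-measurable. -/
def wordWeightInf (S : Finset Λ) (w : ℕ → ℝ≥0∞) (X : Set Ω) (ω : Ω) : ℝ≥0∞ :=
  ⨅ (l : List Λ) (_ : IsSchreierWord S l) (_ : l.prod • ω ∈ X), w l.length

variable (Λ) in
/-- Being `Λ`-invariant, its integral does not depend on the fundamental domain. -/
def orbitInf (f : Ω → ℝ≥0∞) (ω : Ω) : ℝ≥0∞ := ⨅ γ : Λ, f (γ • ω)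

theorem orbitInf_smul (f : Ω → ℝ≥0∞) (δ : Λ) (ω : Ω) :
    orbitInf Λ f (δ • ω) = orbitInf Λ f ω := by
  simp only [orbitInf, smul_smul]
  exact (Equiv.mulRight δ).iInf_comp (g := fun γ => f (γ • ω))

theorem orbitInf_le (f : Ω → ℝ≥0∞) (ω : Ω) : orbitInf Λ f ω ≤ f ω :=
  iInf_le_of_le 1 (by rw [one_smul])

theorem wordWeightInf_le_of_mem_orbit {S : Finset Λ} (hS : Subgroup.closure (S : Set Λ) = ⊤)
    (w : ℕ → ℝ≥0∞) {X : Set Ω} {ω y : Ω} (hyX : y ∈ X) (hy : y ∈ MulAction.orbit Λ ω) :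
    wordWeightInf S w X ω ≤ w (schreierDist S ω y) := by
  obtain ⟨l, hl, hlen, hly⟩ := exists_isSchreierWord_length_eq_schreierDist hS hy
  rw [← hlen]
  exact iInf₂_le_of_le l hl (iInf_le_of_le (hly ▸ hyX) le_rfl)

/-- Uniqueness of the orbit representatives in `X₂` and `X₃` is what makes the two words
composable. -/
theorem le_wordWeightInf_add_orbitInf {S : Finset Λ} {w w₁ w₂ : ℕ → ℝ≥0∞} (hw : Monotone w)
    (hadd : ∀ m n, w (m + n) ≤ w₁ m + w₂ n) {X₂ X₃ : Set Ω} {ω : Ω}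
    (hX₂ : ∀ γ δ : Λ, γ • ω ∈ X₂ → δ • ω ∈ X₂ → γ • ω = δ • ω)
    (hX₃ : ∀ γ δ : Λ, γ • ω ∈ X₃ → δ • ω ∈ X₃ → γ • ω = δ • ω) {γ₃ : Λ} (hγ₃ : γ₃ • ω ∈ X₃) :
    w (schreierDist S ω (γ₃ • ω)) ≤ wordWeightInf S w₁ X₂ ω +
      orbitInf Λ (fun x => ⨅ (_ : x ∈ X₂), wordWeightInf S w₂ X₃ x) ω := by
  simp only [wordWeightInf, orbitInf, ENNReal.iInf_add, ENNReal.add_iInf, le_iInf_iff]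
  intro γ hγ l₂ hl₂ hl₂X l₁ hl₁ hl₁X
  rw [smul_smul] at hl₂X
  have hword : (l₂ ++ l₁).prod • ω = γ₃ • ω := by
    rw [List.prod_append, mul_smul, hX₂ _ _ hl₁X hγ, smul_smul, hX₃ _ _ hl₂X hγ₃]
  have hdist : schreierDist S ω (γ₃ • ω) ≤ l₁.length + l₂.length := by
    have := schreierDist_le_length (fun u hu => (List.mem_append.1 hu).elim (hl₂ u) (hl₁ u)) hword
    rwa [List.length_append, Nat.add_comm] at this
  exact (hw hdist).trans (hadd _ _)

theorem aemeasurable_wordWeightInf [Countable Λ] [MeasurableSpace Ω] {μ : Measure Ω}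
    (hqmp : ∀ γ : Λ, Measure.QuasiMeasurePreserving (γ • · : Ω → Ω) μ μ)
    (S : Finset Λ) (w : ℕ → ℝ≥0∞) {X : Set Ω} (hX : NullMeasurableSet X μ) :
    AEMeasurable (wordWeightInf S w X) μ :=
  .iInf fun l => .iInf fun _ => aemeasurable_iInf_mem_const (hX.preimage (hqmp l.prod)) _

theorem setLIntegral_wordWeightInf_le [MeasurableSpace Ω] {μ : Measure Ω} {S : Finset Λ}
    (hS : Subgroup.closure (S : Set Λ) = ⊤) (w : ℕ → ℝ≥0∞) (X : Set Ω) {Y : Set Ω} {ι : Ω → Ω}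
    (hι : ∀ᵐ ω ∂μ, ι ω ∈ Y ∧ ι ω ∈ MulAction.orbit Λ ω) :
    ∫⁻ ω in X, wordWeightInf S w Y ω ∂μ ≤ ∫⁻ ω in X, w (schreierDist S ω (ι ω)) ∂μ :=
  lintegral_mono_ae <| ae_restrict_of_ae <|
    hι.mono fun _ h => wordWeightInf_le_of_mem_orbit hS w h.1 h.2

end WordWeight

namespace MeasureTheory.IsFundamentalDomain

variable {G : Type*} [Group G] [Countable G] {α : Type*} [MeasurableSpace α] [MulAction G α]
  {μ : Measure α} {X : Set α}

theorem ae_smul_eq_of_smul_mem (h : IsFundamentalDomain G X μ) :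
    ∀ᵐ ω ∂μ, ∀ γ δ : G, γ • ω ∈ X → δ • ω ∈ X → γ • ω = δ • ω := by
  simp only [ae_all_iff]
  intro γ δ
  rcases eq_or_ne γ δ with rfl | hγδ
  · exact .of_forall fun _ _ _ => rfl
  · have hnull : μ (γ⁻¹ • X ∩ δ⁻¹ • X) = 0 := h.aedisjoint (inv_injective.ne hγδ)
    filter_upwards [measure_eq_zero_iff_ae_notMem.1 hnull] with ω hω hγ hδ
    exact absurd ⟨Set.mem_inv_smul_set_iff.2 hγ, Set.mem_inv_smul_set_iff.2 hδ⟩ hω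

theorem setLIntegral_orbitInf_eq (hmp : ∀ γ : G, MeasurePreserving (γ • · : α → α) μ μ)
    {Y : Set α} (hX : IsFundamentalDomain G X μ) (hY : IsFundamentalDomain G Y μ)
    (f : α → ℝ≥0∞) : ∫⁻ ω in X, orbitInf G f ω ∂μ = ∫⁻ ω in Y, orbitInf G f ω ∂μ :=
  have : MeasurableConstSMul G α := ⟨fun γ => (hmp γ).measurable⟩
  have : SMulInvariantMeasure G α μ :=
    ⟨fun γ _ hs => (hmp γ).measure_preimage hs.nullMeasurableSet⟩
  hX.setLIntegral_eq hY _ (orbitInf_smul f)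

end MeasureTheory.IsFundamentalDomain

theorem Monotone.apply_add_div_add_le {φ : ℝ≥0 → ℝ≥0} (hφ : Monotone φ) {c₁ c₂ : ℝ≥0}
    (hc₁ : 0 < c₁) (hc₂ : 0 < c₂) (a b : ℝ≥0) :
    φ ((a + b) / (c₁ + c₂)) ≤ φ (a / c₁) + φ (b / c₂) := by
  have hmediant : (a + b) / (c₁ + c₂) ≤ max (a / c₁) (b / c₂) := by
    rw [div_le_iff₀ (add_pos hc₁ hc₂)]
    calc a + b = a / c₁ * c₁ + b / c₂ * c₂ := by
          rw [div_mul_cancel₀ _ hc₁.ne', div_mul_cancel₀ _ hc₂.ne']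
      _ ≤ max (a / c₁) (b / c₂) * c₁ + max (a / c₁) (b / c₂) * c₂ := by
          gcongr
          exacts [le_max_left _ _, le_max_right _ _]
      _ = max (a / c₁) (b / c₂) * (c₁ + c₂) := by ring
  exact (hφ hmediant).trans (hφ.map_max.trans_le (max_le le_self_add le_add_self))

theorem biInf_coe_le_add {A B C : Set ℝ≥0} (h : ∀ a ∈ A, ∀ b ∈ B, a + b ∈ C) :
    ⨅ c ∈ C, (c : ℝ≥0∞) ≤ (⨅ a ∈ A, (a : ℝ≥0∞)) + ⨅ b ∈ B, (b : ℝ≥0∞) :=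
  ENNReal.le_iInf_add_iInf fun a b => ENNReal.le_iInf_add_iInf fun ha hb =>
    iInf₂_le_of_le _ (h a ha b hb) (ENNReal.coe_add a b).le

theorem cphi_triangle_inequality_general
    {Λ : Type*} [Group Λ] [Countable Λ]
    {Ω : Type*} [MeasurableSpace Ω] (μ : Measure Ω)
    [MulAction Λ Ω] (hmp : ∀ γ : Λ, MeasurePreserving (fun ω : Ω => γ • ω) μ μ)
    (S : Finset Λ) (hSgen : Subgroup.closure (S : Set Λ) = ⊤)
    (φ : NNReal → NNReal) (hφ : Monotone φ)
    (X₁ X₂ X₃ : Set Ω)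
    (h₁ : IsFundamentalDomain Λ X₁ μ)
    (h₂ : IsFundamentalDomain Λ X₂ μ)
    (h₃ : IsFundamentalDomain Λ X₃ μ)
    (ι₂ ι₃ : Ω → Ω)
    (hι₂ : ∀ᵐ ω ∂μ, ι₂ ω ∈ X₂ ∧ ι₂ ω ∈ MulAction.orbit Λ ω)
    (hι₃ : ∀ᵐ ω ∂μ, ι₃ ω ∈ X₃ ∧ ι₃ ω ∈ MulAction.orbit Λ ω) :
    (⨅ c ∈ {c : NNReal | 0 < c ∧
        ∫⁻ ω in X₁, (φ ((schreierDist S ω (ι₃ ω) : NNReal) / c) : ENNReal) ∂μ < ⊤},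
      (c : ENNReal))
    ≤ (⨅ c ∈ {c : NNReal | 0 < c ∧
        ∫⁻ ω in X₁, (φ ((schreierDist S ω (ι₂ ω) : NNReal) / c) : ENNReal) ∂μ < ⊤},
      (c : ENNReal))
      + (⨅ c ∈ {c : NNReal | 0 < c ∧
        ∫⁻ ω in X₂, (φ ((schreierDist S ω (ι₃ ω) : NNReal) / c) : ENNReal) ∂μ < ⊤},
      (c : ENNReal)) := by
  refine biInf_coe_le_add fun c₁ ⟨hc₁, hint₁⟩ c₂ ⟨hc₂, hint₂⟩ => ⟨add_pos hc₁ hc₂, ?_⟩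
  let w : ℝ≥0 → ℕ → ℝ≥0∞ := fun c n => φ (n / c)
  let F := wordWeightInf S (w c₁) X₂
  let G := orbitInf Λ fun x => ⨅ (_ : x ∈ X₂), wordWeightInf S (w c₂) X₃ x
  have hF : ∫⁻ ω in X₁, F ω ∂μ < ⊤ :=
    (setLIntegral_wordWeightInf_le hSgen _ X₁ hι₂).trans_lt hint₁
  have hG : ∫⁻ ω in X₁, G ω ∂μ < ⊤ := by
    rw [h₁.setLIntegral_orbitInf_eq hmp h₂]
    refine (lintegral_mono_ae ?_).trans_lt
      ((setLIntegral_wordWeightInf_le hSgen (w c₂) X₂ hι₃).trans_lt hint₂)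
    filter_upwards [ae_restrict_mem₀ h₂.nullMeasurableSet] with ω hω
    exact (orbitInf_le _ ω).trans (iInf_le _ hω)
  have hbound : ∀ᵐ ω ∂μ, w (c₁ + c₂) (schreierDist S ω (ι₃ ω)) ≤ F ω + G ω := by
    filter_upwards [h₂.ae_smul_eq_of_smul_mem, h₃.ae_smul_eq_of_smul_mem, hι₃]
      with ω hX₂ hX₃ ⟨hι₃X, γ₃, hγ₃⟩
    rw [← hγ₃] at hι₃X ⊢
    refine le_wordWeightInf_add_orbitInf (fun m n hmn => ?_) (fun m n => ?_) hX₂ hX₃ hι₃X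
    · exact ENNReal.coe_le_coe.2 (hφ (by gcongr))
    · simp only [w, Nat.cast_add, ← ENNReal.coe_add, ENNReal.coe_le_coe]
      exact hφ.apply_add_div_add_le hc₁ hc₂ m n
  calc ∫⁻ ω in X₁, w (c₁ + c₂) (schreierDist S ω (ι₃ ω)) ∂μ
      ≤ ∫⁻ ω in X₁, F ω + G ω ∂μ := lintegral_mono_ae (ae_restrict_of_ae hbound)
    _ = (∫⁻ ω in X₁, F ω ∂μ) + ∫⁻ ω in X₁, G ω ∂μ :=
      lintegral_add_left' (aemeasurable_wordWeightInf (fun γ => (hmp γ).quasiMeasurePreserving)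
        S _ h₂.nullMeasurableSet).restrict _
    _ < ⊤ := ENNReal.add_lt_top.2 ⟨hF, hG⟩

/-- For a smooth measure-preserving action of a finitely generated group `Λ` on `(Ω,μ)`,
the quantity `c_{φ,S}(X₁,X₂) = inf{c > 0 : ∫_{Ω/Λ} φ(d_S(ι_{X₁}x, ι_{X₂}x)/c) dμ < ∞}`
is a pseudo-metric (with values in `[0,∞]`) on fundamental domains; in particular it
satisfies the triangle inequality
`c_{φ,S}(X₁,X₃) ≤ c_{φ,S}(X₁,X₂) + c_{φ,S}(X₂,X₃)`.
Here `ι_X ω` denotes the representative of the orbit of `ω` lying in `X`, and the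
integral over `Ω/Λ` is realized as an integral over a fundamental domain. -/
theorem cphi_triangle_inequality
    {Λ : Type*} [Group Λ] [Countable Λ]
    {Ω : Type*} [MeasurableSpace Ω] (μ : Measure Ω) [SigmaFinite μ]
    [MulAction Λ Ω] (hmp : ∀ γ : Λ, MeasurePreserving (fun ω : Ω => γ • ω) μ μ)
    (S : Finset Λ) (hSgen : Subgroup.closure (S : Set Λ) = ⊤)
    (hSsymm : ∀ s ∈ S, s⁻¹ ∈ S)
    (φ : NNReal → NNReal) (hφ : Monotone φ)
    (X₁ X₂ X₃ : Set Ω)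
    (h₁ : IsFundamentalDomain Λ X₁ μ)
    (h₂ : IsFundamentalDomain Λ X₂ μ)
    (h₃ : IsFundamentalDomain Λ X₃ μ)
    (ι₁ ι₂ ι₃ : Ω → Ω)
    (hι₁ : ∀ᵐ ω ∂μ, ι₁ ω ∈ X₁ ∧ ι₁ ω ∈ MulAction.orbit Λ ω)
    (hι₂ : ∀ᵐ ω ∂μ, ι₂ ω ∈ X₂ ∧ ι₂ ω ∈ MulAction.orbit Λ ω)
    (hι₃ : ∀ᵐ ω ∂μ, ι₃ ω ∈ X₃ ∧ ι₃ ω ∈ MulAction.orbit Λ ω) :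
    (⨅ c ∈ {c : NNReal | 0 < c ∧
        ∫⁻ ω in X₁, (φ ((schreierDist S ω (ι₃ ω) : NNReal) / c) : ENNReal) ∂μ < ⊤},
      (c : ENNReal))
    ≤ (⨅ c ∈ {c : NNReal | 0 < c ∧
        ∫⁻ ω in X₁, (φ ((schreierDist S ω (ι₂ ω) : NNReal) / c) : ENNReal) ∂μ < ⊤},
      (c : ENNReal))
      + (⨅ c ∈ {c : NNReal | 0 < c ∧
        ∫⁻ ω in X₂, (φ ((schreierDist S ω (ι₃ ω) : NNReal) / c) : ENNReal) ∂μ < ⊤},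
      (c : ENNReal)) :=
  cphi_triangle_inequality_general μ hmp S hSgen φ hφ X₁ X₂ X₃ h₁ h₂ h₃ ι₂ ι₃ hι₂ hι₃
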